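/- arXiv:2304.02258 — 6 statements merged into one kernel-verified Lean document; each statement's English description precedes it below -/
import Mathlib

section
/- For every finite simple graph G there exists a 2-coloring such that strictly more than half of the vertices are under weak-majority illusion, i.e., the majority winner among their neighbors (possibly a tie) differs from the majority winner of the whole vertex set (possibly a tie). -/
open Finset

variable {V : Type*} [Fintype V] [DecidableEq V]

/-- The strict majority color of a finite set of agents (`true` = red, `false` = blue),
or `none` in case of a tie. -/
def maj (c : V → Bool) (s : Finset V) : Option Bool :=
  if 2 * (s.filter fun v => c v = true).card > s.card then some true
  else if 2 * (s.filter fun v => c v = false).card > s.card then some false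
  else none

/-- Vertex `i` is under weak-majority illusion: the majority winner (possibly a tie)
of its neighborhood differs from the global one. -/
def weakIll (G : SimpleGraph V) [DecidableRel G.Adj] (c : V → Bool) (i : V) : Prop :=
  maj c (G.neighborFinset i) ≠ maj c Finset.univ

/-- Vertex `i` is under strict majority illusion: neither its neighborhood nor the whole
graph is tied, and their majority winners differ. -/
def strictIll (G : SimpleGraph V) [DecidableRel G.Adj] (c : V → Bool) (i : V) : Prop :=
  maj c (G.neighborFinset i) ≠ none ∧ maj c Finset.univ ≠ none ∧
    maj c (G.neighborFinset i) ≠ maj c Finset.univ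

instance (G : SimpleGraph V) [DecidableRel G.Adj] (c : V → Bool) :
    DecidablePred (weakIll G c) := fun _ => by unfold weakIll; infer_instance

instance (G : SimpleGraph V) [DecidableRel G.Adj] (c : V → Bool) :
    DecidablePred (strictIll G c) := fun _ => by unfold strictIll; infer_instance

/-!
Encode the colours as spins `σ = ±1` and take a colouring minimising the Ising energy
`E = ∑ᵥ σᵥ hᵥ`, where `hᵥ = ∑_{w ∼ v} σ_w` is the local field (a maximum cut). Flipping `v`
changes `E` by `-4 σᵥ hᵥ`, so at a minimum no vertex sees a strict majority of its own colour.
If the whole graph has a strict majority, the vertices of that colour, which are more than half,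
are therefore all under illusion. If the graph is tied, either no neighbourhood is tied and every
vertex is under illusion, or flipping a vertex with a tied neighbourhood keeps `E` minimal and
breaks the global tie.
-/

open Matrix

theorem Matrix.IsSymm.dotProduct_mulVec_add_single {ι R : Type*} [Fintype ι] [DecidableEq ι]
    [CommRing R] {A : Matrix ι ι R} (hA : A.IsSymm) {i : ι} (hi : A i i = 0) (x : ι → R)
    (t : R) :
    (x + Pi.single i t) ⬝ᵥ (A *ᵥ (x + Pi.single i t)) = x ⬝ᵥ (A *ᵥ x) + 2 * t * (A *ᵥ x) i := by
  have hsymm : x ⬝ᵥ (A *ᵥ Pi.single i t) = t * (A *ᵥ x) i := by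
    rw [dotProduct_mulVec, dotProduct_single, ← vecMul_transpose, hA.eq, mul_comm]
  have hdiag : Pi.single i t ⬝ᵥ (A *ᵥ Pi.single i t) = 0 := by
    simp [single_dotProduct, mulVec_single, hi]
  rw [mulVec_add, dotProduct_add, add_dotProduct, add_dotProduct, hsymm, hdiag,
    single_dotProduct]
  ring

def spin (b : Bool) : ℤ := if b then 1 else -1

section Spin

variable {α : Type*}

lemma spin_mul_sum_spin (c : α → Bool) (s : Finset α) (b : Bool) :
    spin b * ∑ w ∈ s, spin (c w) = 2 * #{w ∈ s | c w = b} - #s := by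
  have hsplit := card_filter_add_card_filter_not (s := s) (fun w => c w = b)
  have hterm : ∀ w, spin b * spin (c w) = if c w = b then 1 else -1 := by
    intro w; cases b <;> cases c w <;> rfl
  rw [mul_sum, sum_congr rfl fun w _ => hterm w, sum_ite]
  simp only [sum_const, nsmul_eq_mul, mul_one, mul_neg]
  omega

lemma card_filter_true_add_card_filter_false (c : α → Bool) (s : Finset α) :
    #{w ∈ s | c w = true} + #{w ∈ s | c w = false} = #s := by
  simpa using card_filter_add_card_filter_not (s := s) (fun w => c w = true)

variable {c : α → Bool} {s : Finset α}

lemma maj_eq_some_iff {b : Bool} : maj c s = some b ↔ #s < 2 * #{w ∈ s | c w = b} := by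
  have := card_filter_true_add_card_filter_false c s
  unfold maj
  cases b <;> split_ifs <;> simp <;> omega

lemma maj_eq_some_iff_pos {b : Bool} :
    maj c s = some b ↔ 0 < spin b * ∑ w ∈ s, spin (c w) := by
  rw [maj_eq_some_iff, spin_mul_sum_spin]
  omega

lemma maj_eq_none_iff_sum_spin : maj c s = none ↔ ∑ w ∈ s, spin (c w) = 0 := by
  have hcard := card_filter_true_add_card_filter_false c s
  have hsum := spin_mul_sum_spin c s true
  rw [show spin true = 1 from rfl, one_mul] at hsum
  unfold maj
  split_ifs <;> simp <;> omega

lemma spin_comp_update_not [DecidableEq α] (c : α → Bool) (v : α) :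
    spin ∘ Function.update c v (!c v) = spin ∘ c + Pi.single v (-2 * spin (c v)) := by
  ext w
  rcases eq_or_ne w v with rfl | hw
  · cases h : c w <;> simp [spin, h]
  · simp [hw]

end Spin

lemma sum_spin_update_not (c : V → Bool) (v : V) :
    ∑ w, spin (Function.update c v (!c v) w) = ∑ w, spin (c w) - 2 * spin (c v) := by
  simp only [← Function.comp_apply (f := spin), spin_comp_update_not, Pi.add_apply,
    sum_add_distrib, sum_pi_single', mem_univ, if_true]
  ring

lemma maj_univ_update_not_ne_none {c : V → Bool} (hc : maj c univ = none) (v : V) :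
    maj (Function.update c v (!c v)) univ ≠ none := by
  rw [maj_eq_none_iff_sum_spin] at hc
  rw [Ne, maj_eq_none_iff_sum_spin, sum_spin_update_not, hc]
  cases c v <;> simp [spin]

def isingEnergy (G : SimpleGraph V) [DecidableRel G.Adj] (c : V → Bool) : ℤ :=
  (spin ∘ c) ⬝ᵥ (G.adjMatrix ℤ *ᵥ (spin ∘ c))

section IsingEnergy

variable {G : SimpleGraph V} [DecidableRel G.Adj] {c : V → Bool}

lemma isingEnergy_update_not (v : V) :
    isingEnergy G (Function.update c v (!c v)) =
      isingEnergy G c - 4 * spin (c v) * ∑ w ∈ G.neighborFinset v, spin (c w) := by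
  rw [isingEnergy, spin_comp_update_not, G.isSymm_adjMatrix.dotProduct_mulVec_add_single
    (by simp), G.adjMatrix_mulVec_apply, isingEnergy]
  simp only [Function.comp_apply]
  ring

lemma maj_neighborFinset_ne_some_self (hc : ∀ d, isingEnergy G c ≤ isingEnergy G d) (v : V) :
    maj c (G.neighborFinset v) ≠ some (c v) := by
  have := hc (Function.update c v (!c v))
  rw [isingEnergy_update_not] at this
  rw [Ne, maj_eq_some_iff_pos]
  linarith

lemma isingEnergy_update_not_le (hc : ∀ d, isingEnergy G c ≤ isingEnergy G d) {v : V}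
    (hv : maj c (G.neighborFinset v) = none) (d : V → Bool) :
    isingEnergy G (Function.update c v (!c v)) ≤ isingEnergy G d := by
  rw [isingEnergy_update_not, maj_eq_none_iff_sum_spin.1 hv, mul_zero, sub_zero]
  exact hc d

end IsingEnergy

lemma card_lt_two_mul_card_weakIll {W : Type*} [Fintype W] {G : SimpleGraph W}
    [DecidableRel G.Adj] {c : W → Bool} (hc : ∀ v, maj c (G.neighborFinset v) ≠ some (c v))
    {b : Bool} (hb : maj c univ = some b) :
    Fintype.card W < 2 * #{v | weakIll G c v} := by
  have hsub : #{v | c v = b} ≤ #{v | weakIll G c v} :=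
    card_le_card <| monotone_filter_right _ fun v _ hv => by rw [weakIll, hb, ← hv]; exact hc v
  have := maj_eq_some_iff.1 hb
  rw [card_univ] at this
  omega

theorem majority_weak_majority_illusion_possible (G : SimpleGraph V) [DecidableRel G.Adj]
    [Nonempty V] :
    ∃ c : V → Bool,
      2 * (Finset.univ.filter fun i => weakIll G c i).card > Fintype.card V := by
  obtain ⟨c, hc⟩ := Finite.exists_min (isingEnergy G)
  by_cases htie : maj c univ = none
  · by_cases hnb : ∃ v, maj c (G.neighborFinset v) = none
    · obtain ⟨v, hv⟩ := hnb
      obtain ⟨b, hb⟩ := Option.ne_none_iff_exists'.1 (maj_univ_update_not_ne_none htie v)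
      exact ⟨_, card_lt_two_mul_card_weakIll
        (maj_neighborFinset_ne_some_self (isingEnergy_update_not_le hc hv)) hb⟩
    · refine ⟨c, ?_⟩
      rw [filter_true_of_mem fun v _ => by rw [weakIll, htie]; exact fun h => hnb ⟨v, h⟩,
        card_univ]
      have := Fintype.card_pos (α := V)
      omega
  · obtain ⟨b, hb⟩ := Option.ne_none_iff_exists'.1 htie
    exact ⟨c, card_lt_two_mul_card_weakIll (maj_neighborFinset_ne_some_self hc) hb⟩
end

section
/- For any proper 2-coloring of a finite simple graph G with no isolated vertices, either strictly more than half the vertices are under strict majority illusion, or (if the global count is a tie) every vertex is under weak-majority illusion. -/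
/-!
In a proper 2-coloring every neighbor of `i` has the color `!c i`, so a non-empty
neighborhood is unanimous for the color opposite to `i`'s own. If the whole graph has a strict
majority color `b`, each of the more than half of the vertices colored `b` therefore sees the
majority `!b`; if the whole graph is tied, no neighborhood is, so every vertex is deceived.
-/

open Finset

variable {V : Type*} [Fintype V] [DecidableEq V]

lemma maj_eq_some_of_forall_eq {α : Type*} {c : α → Bool} {s : Finset α} {b : Bool}
    (hs : s.Nonempty) (h : ∀ v ∈ s, c v = b) : maj c s = some b := by
  have hb : s.filter (fun v => c v = b) = s := filter_true_of_mem h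
  have hnb : s.filter (fun v => c v = !b) = ∅ :=
    filter_false_of_mem fun v hv => by simp [h v hv]
  have hcard : 0 < s.card := hs.card_pos
  unfold maj
  cases b
  · simp only [Bool.not_false] at hnb
    simp [hb, hnb, hcard]
  · simp only [Bool.not_true] at hnb
    simp [hb, hcard]

lemma card_lt_two_mul_card_filter_of_maj_eq_some {α : Type*} {c : α → Bool} {s : Finset α}
    {b : Bool} (h : maj c s = some b) : s.card < 2 * (s.filter fun v => c v = b).card := by
  unfold maj at h
  split_ifs at h <;> cases h <;> assumption

lemma maj_neighborFinset_eq_not {α : Type*} (G : SimpleGraph α) [G.LocallyFinite]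
    {c : α → Bool} (hproper : ∀ u v : α, G.Adj u v → c u ≠ c v) {i : α} (hi : 0 < G.degree i) :
    maj c (G.neighborFinset i) = some (!c i) := by
  refine maj_eq_some_of_forall_eq ?_ fun v hv => ?_
  · rwa [← card_pos, G.card_neighborFinset_eq_degree]
  · exact Bool.eq_not_iff.mpr (hproper i v ((G.mem_neighborFinset i v).mp hv)).symm

theorem proper_two_coloring_dichotomy (G : SimpleGraph V) [DecidableRel G.Adj]
    (hpos : ∀ v : V, 0 < G.degree v) (c : V → Bool)
    (hproper : ∀ u v : V, G.Adj u v → c u ≠ c v) :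
    2 * (Finset.univ.filter fun i => strictIll G c i).card > Fintype.card V ∨
      (maj c Finset.univ = none ∧ ∀ i : V, weakIll G c i) := by
  have hnbhd i := maj_neighborFinset_eq_not G hproper (hpos i)
  rcases hG : maj c univ with _ | b
  · exact Or.inr ⟨rfl, fun i => by simp [weakIll, hG, hnbhd i]⟩
  · have hsub : (univ.filter fun v => c v = b) ⊆ univ.filter fun i => strictIll G c i := by
      intro i hi
      rw [mem_filter] at hi ⊢
      exact ⟨mem_univ i, by simp [strictIll, hnbhd i, hG, hi.2]⟩
    have hmaj := card_lt_two_mul_card_filter_of_maj_eq_some hG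
    rw [card_univ] at hmaj
    exact Or.inl (hmaj.trans_le (Nat.mul_le_mul_left 2 (card_le_card hsub)))
end

section
/- If G is a finite simple graph with no isolated vertices that admits a proper 2-coloring and has an odd number of vertices, then there exists a 2-coloring under which strictly more than half of the vertices are under strict majority illusion. -/
/-!
Take the proper 2-coloring itself. Since `|V|` is odd, one color `b` wins the global vote
strictly. Every neighbor of a `b`-colored vertex has the other color and there is at least one
neighbor, so each `b`-colored vertex sees a unanimous `!b` neighborhood; the strict majority
of `b`-colored vertices is therefore under strict majority illusion.
-/

open Finset

variable {V : Type*} [Fintype V] [DecidableEq V]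

section Majority

variable {α : Type*}

lemma card_filter_eq_true_add_card_filter_eq_false (c : α → Bool) (s : Finset α) :
    #(s.filter fun v => c v = true) + #(s.filter fun v => c v = false) = #s := by
  simpa only [Bool.not_eq_true] using card_filter_add_card_filter_not (s := s) (c · = true)

lemma maj_eq_some_of_lt_two_mul_card_filter [Fintype α] {c : α → Bool} {s : Finset α}
    {b : Bool} (h : #s < 2 * #(s.filter fun v => c v = b)) : maj c s = some b := by
  have hsplit := card_filter_eq_true_add_card_filter_eq_false c s
  cases b <;> unfold maj
  · rw [if_neg (by omega), if_pos h]
  · rw [if_pos h]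

lemma exists_lt_two_mul_card_filter_of_odd (c : α → Bool) {s : Finset α} (hs : Odd #s) :
    ∃ b, #s < 2 * #(s.filter fun v => c v = b) := by
  have hsplit := card_filter_eq_true_add_card_filter_eq_false c s
  obtain ⟨k, hk⟩ := hs
  by_cases htrue : #s < 2 * #(s.filter fun v => c v = true)
  · exact ⟨true, htrue⟩
  · exact ⟨false, by omega⟩

end Majority

section ProperColoring

omit [DecidableEq V]

variable (G : SimpleGraph V) [DecidableRel G.Adj] {c : V → Bool}

lemma maj_neighborFinset_of_proper (hc : ∀ u v : V, G.Adj u v → c u ≠ c v) {i : V}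
    (hi : 0 < G.degree i) : maj c (G.neighborFinset i) = some (!c i) := by
  have hunanimous : (G.neighborFinset i).filter (fun v => c v = !c i) = G.neighborFinset i :=
    filter_true_of_mem fun v hv =>
      Bool.eq_not_iff.mpr (hc i v ((G.mem_neighborFinset i v).mp hv)).symm
  apply maj_eq_some_of_lt_two_mul_card_filter
  rw [hunanimous, G.card_neighborFinset_eq_degree]
  omega

lemma strictIll_of_maj_univ_eq (hpos : ∀ v : V, 0 < G.degree v)
    (hc : ∀ u v : V, G.Adj u v → c u ≠ c v) {i : V} (hi : maj c univ = some (c i)) :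
    strictIll G c i := by
  rw [strictIll, maj_neighborFinset_of_proper G hc (hpos i), hi]
  simp

end ProperColoring

theorem two_colorable_odd_majority_majority (G : SimpleGraph V) [DecidableRel G.Adj]
    (hpos : ∀ v : V, 0 < G.degree v)
    (hcol : ∃ c : V → Bool, ∀ u v : V, G.Adj u v → c u ≠ c v)
    (hodd : Odd (Fintype.card V)) :
    ∃ c : V → Bool,
      2 * (Finset.univ.filter fun i => strictIll G c i).card > Fintype.card V := by
  obtain ⟨c, hc⟩ := hcol
  obtain ⟨b, hb⟩ := exists_lt_two_mul_card_filter_of_odd c (s := univ) (by simpa using hodd)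
  have hglobal : maj c univ = some b := maj_eq_some_of_lt_two_mul_card_filter hb
  have hsub : (univ.filter fun v => c v = b) ⊆ univ.filter fun i => strictIll G c i :=
    monotone_filter_right _ fun v _ hv => strictIll_of_maj_univ_eq G hpos hc (hv ▸ hglobal)
  have := card_le_card hsub
  rw [card_univ] at hb
  exact ⟨c, by omega⟩
end

section
/- No 2-regular finite simple graph admits a 2-coloring under which at least half of the vertices are under strict majority illusion. -/
/-!
A vertex of degree two sees a strict majority only if both neighbours share a colour, so a
vertex under strict illusion has both neighbours in the global minority. In a `d`-regular graph
with `d > 0`, double counting edges shows that at most `#S` vertices have their whole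
neighbourhood inside a set `S`; taking `S` to be the minority, which is smaller than half of
the graph, bounds the illusioned vertices.
-/

open Finset

variable {V : Type*} [Fintype V] [DecidableEq V]

lemma SimpleGraph.IsRegularOfDegree.card_neighborFinset_subset_le {G : SimpleGraph V}
    [DecidableRel G.Adj] {d : ℕ} (hreg : G.IsRegularOfDegree d) (hd : 0 < d) (S : Finset V) :
    #{i | G.neighborFinset i ⊆ S} ≤ #S := by
  refine Nat.le_of_mul_le_mul_right (card_mul_le_card_mul G.Adj (fun i hi => ?_) fun j _ => ?_) hd
  · have hsub : G.neighborFinset i ⊆ S := (mem_filter.mp hi).2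
    have habove : S.bipartiteAbove G.Adj i = G.neighborFinset i := by
      ext j
      simp only [bipartiteAbove, mem_filter, SimpleGraph.mem_neighborFinset, and_iff_right_iff_imp]
      exact fun hij => hsub (G.mem_neighborFinset i j |>.mpr hij)
    rw [habove, G.card_neighborFinset_eq_degree, hreg i]
  · calc #(bipartiteBelow G.Adj _ j) ≤ #(G.neighborFinset j) := by
          refine card_le_card fun i hi => ?_
          exact (G.mem_neighborFinset j i).mpr (mem_filter.mp hi).2.symm
      _ = d := by rw [G.card_neighborFinset_eq_degree, hreg j]

section Majority

variable {α : Type*} {c : α → Bool} {s : Finset α} {b : Bool}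

lemma card_lt_two_mul_card_of_maj_eq_some (h : maj c s = some b) :
    #s < 2 * #{v ∈ s | c v = b} := by
  unfold maj at h
  split_ifs at h <;> cases h <;> omega

lemma two_mul_card_lt_card_of_maj_eq_some (h : maj c s = some b) :
    2 * #{v ∈ s | c v ≠ b} < #s := by
  have := card_lt_two_mul_card_of_maj_eq_some h
  have := card_filter_add_card_filter_not (s := s) (fun v => c v = b)
  simp only [← ne_eq] at this
  omega

lemma forall_eq_of_maj_eq_some_of_card_le_two (h : maj c s = some b) (hs : #s ≤ 2) :
    ∀ v ∈ s, c v = b := by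
  have hlt := card_lt_two_mul_card_of_maj_eq_some h
  have hle := card_filter_le s (c · = b)
  exact card_filter_eq_iff.mp (by omega)

end Majority

omit [DecidableEq V] in
lemma neighborFinset_subset_of_strictIll {G : SimpleGraph V} [DecidableRel G.Adj]
    (hreg : G.IsRegularOfDegree 2) {c : V → Bool} {b : Bool} (hb : maj c univ = some b) {i : V}
    (hi : strictIll G c i) : G.neighborFinset i ⊆ ({v | c v ≠ b} : Finset V) := by
  obtain ⟨hnone, -, hne⟩ := hi
  obtain ⟨b', hb'⟩ := Option.ne_none_iff_exists'.mp hnone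
  have hcard : #(G.neighborFinset i) ≤ 2 := by rw [G.card_neighborFinset_eq_degree, hreg i]
  intro v hv
  rw [mem_filter, forall_eq_of_maj_eq_some_of_card_le_two hb' hcard v hv]
  exact ⟨mem_univ v, fun h => hne (by rw [hb', hb, h])⟩

theorem two_regular_no_weak_majority_majority (G : SimpleGraph V) [DecidableRel G.Adj]
    [Nonempty V] (hreg : ∀ v : V, G.degree v = 2) (c : V → Bool) :
    2 * (Finset.univ.filter fun i => strictIll G c i).card < Fintype.card V := by
  cases hmaj : maj c univ with
  | none =>
    have : (univ.filter fun i => strictIll G c i) = ∅ :=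
      filter_false_of_mem fun i _ hi => hi.2.1 hmaj
    simpa [this] using Fintype.card_pos
  | some b =>
    calc 2 * #{i | strictIll G c i}
        ≤ 2 * #{i | G.neighborFinset i ⊆ ({v | c v ≠ b} : Finset V)} :=
          Nat.mul_le_mul_left 2 <| card_le_card <| monotone_filter_right _
            fun _ _ => neighborFinset_subset_of_strictIll hreg hmaj
      _ ≤ 2 * #{v | c v ≠ b} :=
          Nat.mul_le_mul_left 2 <| SimpleGraph.IsRegularOfDegree.card_neighborFinset_subset_le
            hreg two_pos _
      _ < Fintype.card V := two_mul_card_lt_card_of_maj_eq_some hmaj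
end

section
/- If a k-regular finite simple graph on n vertices with n and k both even admits a 2-coloring in which at least one vertex is under strict majority illusion, then k ≤ n − 4. -/
/-!
Let the neighbourhood of `i` have strict majority `b` and the whole graph strict majority `!b`.
As `k` and `n` are even, strict majorities exceed half by at least one, so at least `k/2 + 1`
vertices (those in the neighbourhood) have colour `b` and at least `n/2 + 1` have colour `!b`.
These are disjoint, whence `k/2 + n/2 + 2 ≤ n`.
-/

open Finset

variable {V : Type*} [Fintype V] [DecidableEq V]

lemma lt_two_mul_card_filter_of_maj_eq_some {α : Type*} {c : α → Bool} {s : Finset α} {b : Bool}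
    (h : maj c s = some b) : #s < 2 * #(s.filter fun v => c v = b) := by
  unfold maj at h
  split_ifs at h with htrue hfalse
  · obtain rfl : b = true := by simpa using h.symm
    exact htrue
  · obtain rfl : b = false := by simpa using h.symm
    exact hfalse

lemma card_filter_eq_add_card_filter_eq_not {α : Type*} (c : α → Bool) (s : Finset α) (b : Bool) :
    #(s.filter fun v => c v = b) + #(s.filter fun v => c v = !b) = #s := by
  simpa only [Bool.eq_not_iff, ne_eq] using card_filter_add_card_filter_not (s := s) (c · = b)

lemma strictIll.exists_maj_eq_some_not {α : Type*} [Fintype α] {G : SimpleGraph α}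
    [DecidableRel G.Adj] {c : α → Bool} {i : α} (h : strictIll G c i) :
    ∃ b, maj c (G.neighborFinset i) = some b ∧ maj c univ = some !b := by
  obtain ⟨hlocal, hglobal, hne⟩ := h
  obtain ⟨b, hb⟩ := Option.ne_none_iff_exists'.mp hlocal
  obtain ⟨b', hb'⟩ := Option.ne_none_iff_exists'.mp hglobal
  refine ⟨b, hb, ?_⟩
  cases b <;> cases b' <;> simp_all

theorem regular_even_even_degree_bound (G : SimpleGraph V) [DecidableRel G.Adj] (k : ℕ)
    (hreg : ∀ v : V, G.degree v = k)
    (hn : Even (Fintype.card V)) (hk : Even k)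
    (h : ∃ c : V → Bool, ∃ i : V, strictIll G c i) :
    k + 4 ≤ Fintype.card V := by
  obtain ⟨c, i, hill⟩ := h
  obtain ⟨b, hlocal, hglobal⟩ := hill.exists_maj_eq_some_not
  have hk_lt := lt_two_mul_card_filter_of_maj_eq_some hlocal
  have hn_lt := lt_two_mul_card_filter_of_maj_eq_some hglobal
  have hsub : #((G.neighborFinset i).filter fun v => c v = b) ≤ #(univ.filter fun v => c v = b) :=
    card_le_card (filter_subset_filter _ (subset_univ _))
  have hpart := card_filter_eq_add_card_filter_eq_not c univ b
  rw [G.card_neighborFinset_eq_degree, hreg i] at hk_lt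
  rw [card_univ] at hn_lt hpart
  obtain ⟨m, hm⟩ := hn
  obtain ⟨l, hl⟩ := hk
  omega
end

section
/- In a 2-colored graph under a weak majority 2-coloring with a strict global majority color, every vertex of the globally-majority color with at least one neighbor is under weak-majority illusion; consequently more than half of all vertices are under weak-majority illusion. -/
open Finset

variable {V : Type*} [Fintype V] [DecidableEq V]

theorem maj_eq_some_true_iff {α : Type*} {c : α → Bool} {s : Finset α} :
    maj c s = some true ↔ #s < 2 * #(s.filter fun v => c v = true) := by
  unfold maj
  split_ifs <;> simp_all

theorem Finset.two_mul_card_filter_le_of_card_filter_le_card_filter_not {α : Type*}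
    {s : Finset α} {p : α → Prop} [DecidablePred p]
    (h : #(s.filter p) ≤ #(s.filter fun a => ¬p a)) : 2 * #(s.filter p) ≤ #s := by
  have := card_filter_add_card_filter_not (s := s) p
  omega

theorem weak_majority_coloring_gives_illusion_general (G : SimpleGraph V) [DecidableRel G.Adj]
    (c : V → Bool)
    (hwmc : ∀ v : V,
      ((G.neighborFinset v).filter fun w => c w = c v).card ≤
        ((G.neighborFinset v).filter fun w => c w ≠ c v).card)
    (hred : 2 * (Finset.univ.filter fun v => c v = true).card > Fintype.card V) :
    (∀ i : V, c i = true → weakIll G c i) ∧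
    2 * (Finset.univ.filter fun i => weakIll G c i).card > Fintype.card V := by
  have hU : maj c univ = some true := maj_eq_some_true_iff.2 (by simpa using hred)
  have hred_ill : ∀ i, c i = true → weakIll G c i := fun i hi => by
    rw [weakIll, hU, ne_eq, maj_eq_some_true_iff, not_lt]
    apply two_mul_card_filter_le_of_card_filter_le_card_filter_not
    simpa only [hi] using hwmc i
  refine ⟨hred_ill, hred.trans_le ?_⟩
  exact Nat.mul_le_mul_left 2 <| card_le_card <| monotone_filter_right _ fun i _ => hred_ill i

theorem weak_majority_coloring_gives_illusion (G : SimpleGraph V) [DecidableRel G.Adj]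
    (hpos : ∀ v : V, 0 < G.degree v) (c : V → Bool)
    (hwmc : ∀ v : V,
      ((G.neighborFinset v).filter fun w => c w = c v).card ≤
        ((G.neighborFinset v).filter fun w => c w ≠ c v).card)
    (hred : 2 * (Finset.univ.filter fun v => c v = true).card > Fintype.card V) :
    (∀ i : V, c i = true → weakIll G c i) ∧
    2 * (Finset.univ.filter fun i => weakIll G c i).card > Fintype.card V :=
  weak_majority_coloring_gives_illusion_general G c hwmc hred
end
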